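/- Let α > 0. For every ε > 0 there exist nonzero square-summable sequences a = (a_n)_{n≥1} and b = (b_n)_{n≥1} of nonnegative reals such that ∑_{m=1}^∞ ∑_{n=1}^∞ a_m b_n (mn)^{α−1/2} / max(m,n)^{2α} ≥ (2/α − ε) · ‖a‖_{ℓ²} ‖b‖_{ℓ²}. In other words, the norm of the bilinear form B_α on ℓ² × ℓ² is at least 2/α. -/

import Mathlib

/-!
Test the form on `a_n = b_n = n^{-1/2}` for `n ≤ N`, so that `‖a‖² = H_N` (the harmonic number)
and `B_α(a, a) = ∑_{m, n ≤ N} (mn)^{α-1} / max(m, n)^{2α}`. By symmetry this is twice the sum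
over `n ≤ m` minus the diagonal `∑ m^{-2}`, and comparing `∑_{n ≤ m} n^{α-1}` with
`∫ x^{α-1} dx` bounds row `m` of that sum below by `(1/m - m^{-α-1}) / α`. Hence
`B_α(a, a) ≥ (2/α) H_N - C` with `C` independent of `N`, and `H_N → ∞`.
-/

open Finset Real Filter

lemma rpow_sub_one_div_le_sum_rpow {α : ℝ} (hα : 0 < α) (m : ℕ) :
    ((m : ℝ) ^ α - 1) / α ≤ ∑ j ∈ range m, ((j : ℝ) + 1) ^ (α - 1) := by
  rcases le_or_gt α 1 with hle | hgt
  · have hanti : AntitoneOn (fun x : ℝ => x ^ (α - 1)) (Set.Icc 1 (1 + m)) := fun x hx y _ hxy =>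
      rpow_le_rpow_of_nonpos (one_pos.trans_le hx.1) hxy (by linarith)
    calc ((m : ℝ) ^ α - 1) / α ≤ ((1 + m) ^ α - 1) / α := by
          gcongr
          linarith
      _ = ∫ x in (1 : ℝ)..1 + m, x ^ (α - 1) := by
          rw [integral_rpow (Or.inl (by linarith)), sub_add_cancel, one_rpow]
      _ ≤ ∑ j ∈ range m, (1 + (j : ℝ)) ^ (α - 1) := hanti.integral_le_sum
      _ = ∑ j ∈ range m, ((j : ℝ) + 1) ^ (α - 1) := by simp only [add_comm]
  · have hmono : MonotoneOn (fun x : ℝ => x ^ (α - 1)) (Set.Icc 0 (0 + m)) := fun x hx y _ hxy =>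
      rpow_le_rpow hx.1 hxy (by linarith)
    calc ((m : ℝ) ^ α - 1) / α ≤ (0 + m : ℝ) ^ α / α := by
          rw [zero_add]
          gcongr
          linarith
      _ = ∫ x in (0 : ℝ)..0 + m, x ^ (α - 1) := by
          rw [integral_rpow (Or.inl (by linarith)), sub_add_cancel, zero_rpow hα.ne', sub_zero]
      _ ≤ ∑ j ∈ range m, (0 + ((j + 1 : ℕ) : ℝ)) ^ (α - 1) := hmono.integral_le_sum
      _ = ∑ j ∈ range m, ((j : ℝ) + 1) ^ (α - 1) := by push_cast; simp only [zero_add]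

lemma summable_nat_add_one_rpow {p : ℝ} (hp : p < -1) :
    Summable fun i : ℕ => ((i : ℝ) + 1) ^ p := by
  simpa using (summable_nat_add_iff 1).mpr (summable_nat_rpow.mpr hp)

theorem sum_range_sum_range_eq_of_symm {M : Type*} [AddCommMonoid M] {t : ℕ → ℕ → M}
    (ht : ∀ i j, t i j = t j i) (N : ℕ) :
    ∑ i ∈ range N, ∑ j ∈ range N, t i j = ∑ i ∈ range N, (2 • ∑ j ∈ range i, t i j + t i i) := by
  induction N with
  | zero => simp
  | succ N ih =>
    simp only [sum_range_succ, sum_add_distrib]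
    rw [ih, sum_congr rfl fun i _ => ht i N]
    simp only [sum_add_distrib, two_nsmul]
    abel

noncomputable def testKernel (α x y : ℝ) : ℝ := (x * y) ^ (α - 1) / max x y ^ (2 * α)

lemma testKernel_comm (α x y : ℝ) : testKernel α x y = testKernel α y x := by
  rw [testKernel, testKernel, mul_comm, max_comm]

lemma testKernel_of_le {α x y : ℝ} (hy : 0 < y) (hyx : y ≤ x) :
    testKernel α x y = x ^ (-α - 1) * y ^ (α - 1) := by
  have hx := hy.trans_le hyx
  rw [testKernel, max_eq_left hyx, mul_rpow hx.le hy.le, mul_div_right_comm, ← rpow_sub hx]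
  ring_nf

lemma inv_sub_rpow_div_le_sum_testKernel {α : ℝ} (hα : 0 < α) (i : ℕ) :
    (((i : ℝ) + 1)⁻¹ - ((i : ℝ) + 1) ^ (-α - 1)) / α
      ≤ ∑ j ∈ range (i + 1), testKernel α (i + 1) (j + 1) := by
  have hx : (0 : ℝ) < i + 1 := by positivity
  have hrow : ∑ j ∈ range (i + 1), testKernel α (i + 1) (j + 1)
      = ((i : ℝ) + 1) ^ (-α - 1) * ∑ j ∈ range (i + 1), ((j : ℝ) + 1) ^ (α - 1) := by
    rw [mul_sum]
    refine sum_congr rfl fun j hj => testKernel_of_le (by positivity) ?_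
    have := mem_range.mp hj
    exact_mod_cast this
  calc (((i : ℝ) + 1)⁻¹ - ((i : ℝ) + 1) ^ (-α - 1)) / α
      = ((i : ℝ) + 1) ^ (-α - 1) * ((((i + 1 : ℕ) : ℝ) ^ α - 1) / α) := by
        push_cast
        rw [mul_div_assoc', mul_sub, mul_one, ← rpow_add hx, ← rpow_neg_one]
        ring_nf
    _ ≤ _ := by
        rw [hrow]
        gcongr
        exact rpow_sub_one_div_le_sum_rpow hα _


lemma exists_harmonic_sub_le_sum_testKernel {α : ℝ} (hα : 0 < α) : ∃ C, ∀ N,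
    2 / α * ∑ i ∈ range N, 1 / ((i : ℝ) + 1) - C
      ≤ ∑ i ∈ range N, ∑ j ∈ range N, testKernel α (i + 1) (j + 1) := by
  set g : ℕ → ℝ := fun i => 2 / α * ((i : ℝ) + 1) ^ (-α - 1) + ((i : ℝ) + 1) ^ (-2 : ℝ)
  have hg : Summable g := ((summable_nat_add_one_rpow (by linarith)).mul_left _).add
    (summable_nat_add_one_rpow (by norm_num))
  refine ⟨∑' i, g i, fun N => ?_⟩
  have hrow (i : ℕ) : 2 / α * (1 / ((i : ℝ) + 1)) - g i
      ≤ 2 • ∑ j ∈ range i, testKernel α (i + 1) (j + 1) + testKernel α (i + 1) (i + 1) := by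
    have hx : (0 : ℝ) < i + 1 := by positivity
    have hdiag : testKernel α (i + 1) (i + 1) = ((i : ℝ) + 1) ^ (-2 : ℝ) := by
      rw [testKernel_of_le hx le_rfl, ← rpow_add hx]
      ring_nf
    have := inv_sub_rpow_div_le_sum_testKernel hα i
    rw [sum_range_succ] at this
    have hrhs : 2 / α * (1 / ((i : ℝ) + 1)) - 2 / α * ((i : ℝ) + 1) ^ (-α - 1)
        = 2 * ((((i : ℝ) + 1)⁻¹ - ((i : ℝ) + 1) ^ (-α - 1)) / α) := by ring
    rw [two_nsmul, hdiag]
    simp only [g]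
    linarith
  calc 2 / α * ∑ i ∈ range N, 1 / ((i : ℝ) + 1) - ∑' i, g i
      ≤ ∑ i ∈ range N, (2 / α * (1 / ((i : ℝ) + 1)) - g i) := by
        rw [sum_sub_distrib, ← mul_sum]
        gcongr
        exact hg.sum_le_tsum _ fun i _ => by positivity
    _ ≤ _ := by
        rw [sum_range_sum_range_eq_of_symm fun i j => testKernel_comm α _ _]
        exact sum_le_sum fun i _ => hrow i

lemma hasSum_pnat_of_eq_zero {M : Type*} [AddCommMonoid M] [TopologicalSpace M] {f : ℕ → M}
    {N : ℕ} (hf : ∀ n, N < n → f n = 0) :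
    HasSum (fun n : ℕ+ => f n) (∑ i ∈ range N, f (i + 1)) :=
  hasSum_pnat_iff_hasSum_succ.mpr <| hasSum_sum_of_ne_finset_zero fun i hi =>
    hf _ (by simpa using hi)

noncomputable def testSeq (N n : ℕ) : ℝ := if n ≤ N then (n : ℝ) ^ (-(1 / 2) : ℝ) else 0

lemma testSeq_nonneg (N n : ℕ) : 0 ≤ testSeq N n := by
  unfold testSeq
  split_ifs <;> positivity

lemma testSeq_of_lt {N n : ℕ} (h : N < n) : testSeq N n = 0 := if_neg h.not_ge

lemma hasSum_testSeq_sq (N : ℕ) :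
    HasSum (fun n : ℕ+ => testSeq N n ^ 2) (∑ i ∈ range N, 1 / ((i : ℝ) + 1)) := by
  convert hasSum_pnat_of_eq_zero (f := fun n => testSeq N n ^ 2)
    fun n h => by rw [testSeq_of_lt h, sq, zero_mul] using 1
  refine sum_congr rfl fun i hi => ?_
  rw [testSeq, if_pos (show i + 1 ≤ N from mem_range.mp hi), ← rpow_natCast, ← rpow_mul (by positivity)]
  push_cast
  norm_num [rpow_neg_one]

lemma testSeq_ne_zero {N : ℕ} (hN : 1 ≤ N) : (fun n : ℕ+ => testSeq N n) ≠ 0 := by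
  refine fun h => one_ne_zero (α := ℝ) ?_
  simpa [testSeq, hN] using congrFun h 1

lemma testSeq_mul_testSeq_mul_hilbert {N m n : ℕ} (α : ℝ) (hm : 0 < m) (hn : 0 < n)
    (hmN : m ≤ N) (hnN : n ≤ N) :
    testSeq N m * testSeq N n * ((m : ℝ) * n) ^ (α - 1 / 2) / max (m : ℝ) n ^ (2 * α)
      = testKernel α m n := by
  have hm' : (0 : ℝ) < m := by exact_mod_cast hm
  have hn' : (0 : ℝ) < n := by exact_mod_cast hn
  rw [testSeq, testSeq, if_pos hmN, if_pos hnN, testKernel, ← mul_rpow hm'.le hn'.le,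
    ← rpow_add (by positivity)]
  ring_nf

lemma tsum_tsum_testSeq_mul_hilbert (α : ℝ) (N : ℕ) :
    ∑' (m : ℕ+) (n : ℕ+),
        testSeq N m * testSeq N n * ((m : ℝ) * (n : ℝ)) ^ (α - 1 / 2) / max (m : ℝ) n ^ (2 * α)
      = ∑ i ∈ range N, ∑ j ∈ range N, testKernel α (i + 1) (j + 1) := by
  set F : ℕ → ℕ → ℝ := fun m n =>
    testSeq N m * testSeq N n * ((m : ℝ) * n) ^ (α - 1 / 2) / max (m : ℝ) n ^ (2 * α)
  have hrow (m : ℕ) : ∑' n : ℕ+, F m n = ∑ j ∈ range N, F m (j + 1) :=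
    (hasSum_pnat_of_eq_zero (f := F m) fun n h => by simp [F, testSeq_of_lt h]).tsum_eq
  calc ∑' (m : ℕ+) (n : ℕ+), F m n = ∑' m : ℕ+, ∑ j ∈ range N, F m (j + 1) :=
        tsum_congr fun m => hrow m
    _ = ∑ i ∈ range N, ∑ j ∈ range N, F (i + 1) (j + 1) :=
        (hasSum_pnat_of_eq_zero (f := fun m => ∑ j ∈ range N, F m (j + 1))
          fun m h => by simp [F, testSeq_of_lt h]).tsum_eq
    _ = _ := sum_congr rfl fun i hi => sum_congr rfl fun j hj => by
        simp only [F]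
        rw [testSeq_mul_testSeq_mul_hilbert (m := i + 1) (n := j + 1) α (by omega) (by omega)
          (mem_range.mp hi) (mem_range.mp hj)]
        push_cast
        rfl

theorem bilinear_form_lower_bound_two_div_alpha (α : ℝ) (hα : 0 < α) (ε : ℝ) (hε : 0 < ε) :
    ∃ a b : ℕ+ → ℝ, (∀ n, 0 ≤ a n) ∧ (∀ n, 0 ≤ b n) ∧
      (Summable fun n => a n ^ 2) ∧ (Summable fun n => b n ^ 2) ∧
      a ≠ 0 ∧ b ≠ 0 ∧
      (2/α - ε) * (Real.sqrt (∑' n : ℕ+, a n ^ 2) * Real.sqrt (∑' n : ℕ+, b n ^ 2))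
        ≤ ∑' (m : ℕ+) (n : ℕ+),
            a m * b n * ((m : ℝ) * (n : ℝ)) ^ (α - 1/2) / (max (m : ℝ) (n : ℝ)) ^ (2*α) := by
  obtain ⟨C, hC⟩ := exists_harmonic_sub_le_sum_testKernel hα
  obtain ⟨N, hN, hHN⟩ : ∃ N, 1 ≤ N ∧ C / ε ≤ ∑ i ∈ range N, 1 / ((i : ℝ) + 1) :=
    ((eventually_ge_atTop 1).and
      (tendsto_sum_range_one_div_nat_succ_atTop.eventually_ge_atTop _)).exists
  have hsq := hasSum_testSeq_sq N
  refine ⟨fun n => testSeq N n, fun n => testSeq N n, fun n => testSeq_nonneg N n,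
    fun n => testSeq_nonneg N n, hsq.summable, hsq.summable, testSeq_ne_zero hN,
    testSeq_ne_zero hN, ?_⟩
  rw [hsq.tsum_eq, mul_self_sqrt (sum_nonneg fun i _ => by positivity),
    tsum_tsum_testSeq_mul_hilbert, sub_mul]
  linarith [hC N, (div_le_iff₀' hε).mp hHN]
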